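/- In the symmetric family ż = i(z²−η₁)(z²+η₂)/(1−z²), with η₁, η₂ ∈ ℝ₊ and η₁ > 1, the equilibria A = √η₁ and C = −√η₁ have real nonzero periods (hence are centers), and the vector field is reversible with respect to ℝ (conjugating the flow to the reversed flow) and symmetric with respect to iℝ. -/
import Mathlib


open Complex

/-- In the family `ż = V(z) = i(z²−η₁)(z²+η₂)/(1−z²)` with `η₁, η₂ > 0` real and `η₁ > 1`:
the field is symmetric w.r.t. `iℝ` (`V(−z̄) = −conj(V(z))`), reversible w.r.t. `ℝ`
(`conj(V(z̄)) = −V(z)`), and the equilibria `A = √η₁`, `C = −√η₁` have real nonzero periods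
`ν = 2πi·Q(±A)/P'(±A)` (hence are centers). -/
theorem symmetric_family_centers (η₁ η₂ : ℝ) (h1 : 0 < η₁) (h2 : 0 < η₂) (h3 : 1 < η₁) :
    letI V : ℂ → ℂ := fun z =>
      Complex.I * ((z ^ 2 - (η₁ : ℂ)) * (z ^ 2 + (η₂ : ℂ))) / (1 - z ^ 2)
    letI A : ℂ := (Real.sqrt η₁ : ℂ)
    letI P' : ℂ → ℂ := fun z =>
      Complex.I * (2 * z * (z ^ 2 + (η₂ : ℂ)) + 2 * z * (z ^ 2 - (η₁ : ℂ)))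
    letI νA : ℂ := 2 * Real.pi * Complex.I * (1 - (η₁ : ℂ)) / P' A
    letI νC : ℂ := 2 * Real.pi * Complex.I * (1 - (η₁ : ℂ)) / P' (-A)
    (∀ z : ℂ, V (-(starRingEnd ℂ z)) = -(starRingEnd ℂ (V z))) ∧
    (∀ z : ℂ, starRingEnd ℂ (V (starRingEnd ℂ z)) = -V z) ∧
    νA.im = 0 ∧ νA ≠ 0 ∧ νC.im = 0 ∧ νC ≠ 0 := by
  have hs : Real.sqrt η₁ ^ 2 = η₁ := Real.sq_sqrt h1.le
  have hs0 : (0:ℝ) < Real.sqrt η₁ := Real.sqrt_pos.2 h1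
  have hA : ((Real.sqrt η₁ : ℂ)) ^ 2 = (η₁ : ℂ) := by
    rw [← Complex.ofReal_pow, hs]
  have hsC : ((Real.sqrt η₁ : ℂ)) ≠ 0 := by exact_mod_cast hs0.ne'
  have hden : (η₁ : ℂ) + (η₂ : ℂ) ≠ 0 := by
    have : (0:ℝ) < η₁ + η₂ := by linarith
    exact_mod_cast this.ne'
  set r : ℝ := Real.pi * (1 - η₁) / (Real.sqrt η₁ * (η₁ + η₂)) with hr
  have hrneg : r < 0 := by
    apply div_neg_of_neg_of_pos
    · exact mul_neg_of_pos_of_neg Real.pi_pos (by linarith)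
    · positivity
  have hPA : Complex.I * (2 * (Real.sqrt η₁ : ℂ) * ((Real.sqrt η₁ : ℂ) ^ 2 + (η₂ : ℂ)) +
      2 * (Real.sqrt η₁ : ℂ) * ((Real.sqrt η₁ : ℂ) ^ 2 - (η₁ : ℂ))) =
      Complex.I * (2 * (Real.sqrt η₁ : ℂ) * ((η₁ : ℂ) + (η₂ : ℂ))) := by
    rw [hA]; ring
  have hPC : Complex.I * (2 * (-(Real.sqrt η₁ : ℂ)) * ((-(Real.sqrt η₁ : ℂ)) ^ 2 + (η₂ : ℂ)) +
      2 * (-(Real.sqrt η₁ : ℂ)) * ((-(Real.sqrt η₁ : ℂ)) ^ 2 - (η₁ : ℂ))) =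
      Complex.I * (-(2 * (Real.sqrt η₁ : ℂ) * ((η₁ : ℂ) + (η₂ : ℂ)))) := by
    rw [neg_pow, hA]; ring
  have hνA : 2 * (Real.pi : ℂ) * Complex.I * (1 - (η₁ : ℂ)) /
      (Complex.I * (2 * (Real.sqrt η₁ : ℂ) * ((Real.sqrt η₁ : ℂ) ^ 2 + (η₂ : ℂ)) +
        2 * (Real.sqrt η₁ : ℂ) * ((Real.sqrt η₁ : ℂ) ^ 2 - (η₁ : ℂ)))) = (r : ℂ) := by
    rw [hPA, hr]
    push_cast
    field_simp
  have hνC : 2 * (Real.pi : ℂ) * Complex.I * (1 - (η₁ : ℂ)) /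
      (Complex.I * (2 * (-(Real.sqrt η₁ : ℂ)) * ((-(Real.sqrt η₁ : ℂ)) ^ 2 + (η₂ : ℂ)) +
        2 * (-(Real.sqrt η₁ : ℂ)) * ((-(Real.sqrt η₁ : ℂ)) ^ 2 - (η₁ : ℂ)))) = ((-r : ℝ) : ℂ) := by
    rw [hPC, hr]
    push_cast
    field_simp
  have hrC : ((r:ℝ):ℂ) ≠ 0 := by exact_mod_cast hrneg.ne
  refine ⟨?_, ?_, ?_, ?_, ?_, ?_⟩
  · intro z
    simp only [map_div₀, map_mul, map_sub, map_add, map_pow, map_one, Complex.conj_I,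
      Complex.conj_ofReal, Complex.conj_conj]
    ring
  · intro z
    simp only [map_div₀, map_mul, map_sub, map_add, map_pow, map_one, Complex.conj_I,
      Complex.conj_ofReal, Complex.conj_conj]
    ring
  · show (2 * (Real.pi : ℂ) * Complex.I * (1 - (η₁ : ℂ)) / _).im = 0
    rw [hνA]; exact Complex.ofReal_im r
  · show 2 * (Real.pi : ℂ) * Complex.I * (1 - (η₁ : ℂ)) / _ ≠ 0
    rw [hνA]; exact hrC
  · show (2 * (Real.pi : ℂ) * Complex.I * (1 - (η₁ : ℂ)) / _).im = 0
    rw [hνC]; exact Complex.ofReal_im _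
  · show 2 * (Real.pi : ℂ) * Complex.I * (1 - (η₁ : ℂ)) / _ ≠ 0
    rw [hνC]
    simpa using hrneg.ne
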